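/- arXiv:2409.04120 — 3 statements merged into one kernel-verified Lean document; each statement's English description precedes it below -/
import Mathlib

section
/- Suppose: (i) sup_t E[|U_t|⁴ + |Y_t|⁴] < ∞ (which holds when the closed-loop process {(U_t, Y_t)} is r-mean exponentially stable with r = 4); (ii) the prediction functions f_θ are uniformly stable, i.e. there exist C < ∞, C′ < ∞ and 0 < λ < 1, independent of θ, such that for all t > s > 0 and all arguments, |f_θ(u_{1:t−1}, y_{1:t−1}) − f_θ(u_{t−s+1:t−1}, y_{t−s+1:t−1})| ≤ C Σ_{k=1}^{t−s} λ^{t−k}(|u_k| + |y_k|), |f_θ(u_{1:t−1}, y_{1:t−1}) − f_θ(0, …, 0)| ≤ C Σ_{k=1}^{t−1} λ^{t−k}(|u_k| + |y_k|), and |f_θ(0, …, 0)| ≤ C′. Then the finite-memory approximation property (S1) holds: there exist C″ < ∞ and 0 < λ″ < 1, independent of θ, such that E[|ℓ_t(θ) − ℓ_{t,s}(θ)|²] ≤ C″·(λ″)^s for all 0 < s < t and all θ ∈ Θ. -/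
/-!
Expanding the Gaussian log-density gives
`ℓ_t - ℓ_{t,s} = (Ŷ_t - Ŷ_{t,s}) (2 Y_t - Ŷ_t - Ŷ_{t,s}) / (2σ²)`, so by Hölder's inequality
`‖ℓ_t - ℓ_{t,s}‖₂ ≤ (2σ²)⁻¹ ‖Ŷ_t - Ŷ_{t,s}‖₄ (2 ‖Y_t‖₄ + ‖Ŷ_t‖₄ + ‖Ŷ_{t,s}‖₄)`.
Uniform stability dominates `|Ŷ_t - Ŷ_{t,s}|` by `C λ^s` times a geometrically weighted sum of
`|U_k| + |Y_k|`, and `|Ŷ_t|`, `|Ŷ_{t,s}|` by such sums plus `C'`. By Minkowski's inequality and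
the uniform fourth-moment bound, `‖Ŷ_t - Ŷ_{t,s}‖₄ = O(λ^s)` while the other three `L⁴` norms are
`O(1)`, uniformly in `θ`, `t` and `s`; squaring gives (S1) with `λ'' = λ²`.
-/

open MeasureTheory Filter

noncomputable section

/-- Log-density of the Gaussian distribution `N(y; m, σ²)`. -/
def gaussLogLik (σ y m : ℝ) : ℝ :=
  Real.log ((Real.sqrt (2 * Real.pi) * σ)⁻¹ * Real.exp (-((y - m) ^ 2) / (2 * σ ^ 2)))

/-- The model prediction at (1-based) time `t`, using the whole past:
`Ŷ_t = f_θ(U_{1:t-1}, Y_{1:t-1})`.  Here `f θ n u y` is the prediction from `n` past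
observations `u 0 = u_1, …, u (n-1) = u_n` (and similarly for `y`). -/
def predFull {Ω P : Type*} (f : P → ℕ → (ℕ → ℝ) → (ℕ → ℝ) → ℝ)
    (U Y : ℕ → Ω → ℝ) (θ : P) (t : ℕ) (ω : Ω) : ℝ :=
  f θ (t - 1) (fun k => U (k + 1) ω) (fun k => Y (k + 1) ω)

/-- The finite-memory prediction at (1-based) time `t`, using only the last `s - 1`
observations: `Ŷ_{t,s} = f_θ(U_{t-s+1:t-1}, Y_{t-s+1:t-1})`. -/
def predFM {Ω P : Type*} (f : P → ℕ → (ℕ → ℝ) → (ℕ → ℝ) → ℝ)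
    (U Y : ℕ → Ω → ℝ) (θ : P) (s t : ℕ) (ω : Ω) : ℝ :=
  f θ (s - 1) (fun k => U (t - s + 1 + k) ω) (fun k => Y (t - s + 1 + k) ω)

open scoped ENNReal

lemma gaussLogLik_sub {σ : ℝ} (hσ : σ ≠ 0) (y m₁ m₂ : ℝ) :
    gaussLogLik σ y m₁ - gaussLogLik σ y m₂ = (2 * σ ^ 2)⁻¹ * ((m₁ - m₂) * (2 * y - m₁ - m₂)) := by
  have hc : (Real.sqrt (2 * Real.pi) * σ)⁻¹ ≠ 0 := by positivity
  simp only [gaussLogLik, Real.log_mul hc (Real.exp_ne_zero _), Real.log_exp]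
  field_simp
  ring

lemma sum_range_pow_sub_succ_le {lam : ℝ} (h0 : 0 ≤ lam) (h1 : lam < 1) {n m : ℕ} (hnm : n ≤ m) :
    ∑ k ∈ Finset.range n, lam ^ (m - (k + 1)) ≤ lam ^ (m - n) / (1 - lam) := by
  calc ∑ k ∈ Finset.range n, lam ^ (m - (k + 1))
      = ∑ k ∈ Finset.Ico (m - n) m, lam ^ k := by
        rw [← Finset.sum_range_reflect, Finset.sum_Ico_eq_sum_range, Nat.sub_sub_self hnm]
        refine Finset.sum_congr rfl fun k hk => ?_
        rw [Finset.mem_range] at hk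
        congr 1
        omega
    _ ≤ lam ^ (m - n) / (1 - lam) := geom_sum_Ico_le_of_lt_one h0 h1

lemma sum_range_pow_sub_succ_le_inv {lam : ℝ} (h0 : 0 ≤ lam) (h1 : lam < 1) {n m : ℕ}
    (hnm : n ≤ m) : ∑ k ∈ Finset.range n, lam ^ (m - (k + 1)) ≤ (1 - lam)⁻¹ :=
  (sum_range_pow_sub_succ_le h0 h1 hnm).trans <| by
    rw [div_eq_mul_inv]
    exact mul_le_of_le_one_left (inv_nonneg.2 (sub_nonneg.2 h1.le)) (pow_le_one₀ h0 h1.le)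

lemma abs_le_add_of_abs_sub_le {a b x y : ℝ} (h₁ : |a - b| ≤ x) (h₂ : |b| ≤ y) : |a| ≤ x + y := by
  linarith [abs_sub_abs_le_abs_sub a b]

instance ENNReal.HolderTriple.instFourFourTwo : ENNReal.HolderTriple 4 4 2 :=
  ⟨by rw [← two_mul, show (4 : ℝ≥0∞) = 2 * 2 by norm_num, ENNReal.mul_inv (by simp) (by simp),
    ← mul_assoc, ENNReal.mul_inv_cancel (by simp) (by simp), one_mul]⟩

section Lp

variable {Ω : Type*} [MeasurableSpace Ω] {μ : Measure Ω}

lemma eLpNorm_le_of_integral_pow_le {f g : Ω → ℝ} {n : ℕ} (hn : n ≠ 0) (hg : Integrable g μ)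
    (hfg : ∀ ω, |f ω| ^ n ≤ g ω) {K : ℝ} (hK : ∫ ω, g ω ∂μ ≤ K) :
    eLpNorm f n μ ≤ ENNReal.ofReal K ^ (n⁻¹ : ℝ) := by
  have hlin : ∫⁻ ω, ‖f ω‖ₑ ^ (n : ℝ) ∂μ ≤ ENNReal.ofReal K :=
    calc ∫⁻ ω, ‖f ω‖ₑ ^ (n : ℝ) ∂μ = ∫⁻ ω, ENNReal.ofReal (|f ω| ^ n) ∂μ := by
          simp [Real.enorm_eq_ofReal_abs, ENNReal.ofReal_pow]
      _ ≤ ∫⁻ ω, ENNReal.ofReal (g ω) ∂μ :=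
          lintegral_mono fun ω => ENNReal.ofReal_le_ofReal (hfg ω)
      _ = ENNReal.ofReal (∫ ω, g ω ∂μ) :=
          (ofReal_integral_eq_lintegral_ofReal hg
            (ae_of_all _ fun ω => (by positivity : 0 ≤ |f ω| ^ n).trans (hfg ω))).symm
      _ ≤ ENNReal.ofReal K := ENNReal.ofReal_le_ofReal hK
  have := eLpNorm_nnreal_eq_lintegral (f := f) (μ := μ) (p := n) (by exact_mod_cast hn)
  simp only [ENNReal.coe_natCast, NNReal.coe_natCast] at this
  rw [this, one_div]
  gcongr

lemma eLpNorm_weighted_sum_le {ι : Type*} {p : ℝ≥0∞} (hp : 1 ≤ p) {X : ι → Ω → ℝ}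
    (hX : ∀ i, AEStronglyMeasurable (X i) μ) {ρ : ℝ≥0∞} (hXρ : ∀ i, eLpNorm (X i) p μ ≤ ρ)
    {s : Finset ι} {w : ι → ℝ} (hw : ∀ i, 0 ≤ w i) {B : ℝ} (hB : ∑ i ∈ s, w i ≤ B) :
    eLpNorm (fun ω => ∑ i ∈ s, w i * X i ω) p μ ≤ ENNReal.ofReal B * ρ := by
  calc eLpNorm (fun ω => ∑ i ∈ s, w i * X i ω) p μ
      = eLpNorm (∑ i ∈ s, w i • X i) p μ := by
        congr 1; ext ω; simp
    _ ≤ ∑ i ∈ s, eLpNorm (w i • X i) p μ :=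
        eLpNorm_sum_le (fun i _ => (hX i).const_smul _) hp
    _ ≤ ∑ i ∈ s, ENNReal.ofReal (w i) * ρ := by
        gcongr with i
        rw [eLpNorm_const_smul, Real.enorm_of_nonneg (hw i)]
        gcongr
        exact hXρ i
    _ = ENNReal.ofReal (∑ i ∈ s, w i) * ρ := by
        rw [← Finset.sum_mul, ENNReal.ofReal_sum_of_nonneg fun i _ => hw i]
    _ ≤ ENNReal.ofReal B * ρ := by gcongr

lemma eLpNorm_le_of_abs_le_weighted_sum_add [IsProbabilityMeasure μ] {ι : Type*} {p : ℝ≥0∞}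
    (hp : 1 ≤ p) {X : ι → Ω → ℝ} (hX : ∀ i, AEStronglyMeasurable (X i) μ) {ρ : ℝ≥0∞}
    (hXρ : ∀ i, eLpNorm (X i) p μ ≤ ρ) {s : Finset ι} {w : ι → ℝ} (hw : ∀ i, 0 ≤ w i) {B : ℝ}
    (hB : ∑ i ∈ s, w i ≤ B) {Z : Ω → ℝ} {C c : ℝ}
    (hZ : ∀ ω, |Z ω| ≤ C * ∑ i ∈ s, w i * X i ω + c) :
    eLpNorm Z p μ ≤ ‖C‖ₑ * (ENNReal.ofReal B * ρ) + ‖c‖ₑ := by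
  set S : Ω → ℝ := fun ω => ∑ i ∈ s, w i * X i ω
  have hS : AEStronglyMeasurable S μ :=
    Finset.aestronglyMeasurable_fun_sum _ fun i _ => (hX i).const_mul _
  calc eLpNorm Z p μ ≤ eLpNorm (C • S + fun _ => c) p μ := eLpNorm_mono_real hZ
    _ ≤ eLpNorm (C • S) p μ + eLpNorm (fun _ : Ω => c) p μ :=
        eLpNorm_add_le (hS.const_smul C) aestronglyMeasurable_const hp
    _ ≤ ‖C‖ₑ * (ENNReal.ofReal B * ρ) + ‖c‖ₑ := by
        rw [eLpNorm_const_smul, eLpNorm_const c (zero_lt_one.trans_le hp).ne'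
          (IsProbabilityMeasure.ne_zero μ), measure_univ, ENNReal.one_rpow, mul_one]
        gcongr
        exact eLpNorm_weighted_sum_le hp hX hXρ hw hB

lemma eLpNorm_gaussLogLik_sub_le {σ : ℝ} (hσ : σ ≠ 0) {Y m₁ m₂ : Ω → ℝ}
    (hY : AEStronglyMeasurable Y μ) (hm₁ : AEStronglyMeasurable m₁ μ)
    (hm₂ : AEStronglyMeasurable m₂ μ) :
    eLpNorm (fun ω => gaussLogLik σ (Y ω) (m₁ ω) - gaussLogLik σ (Y ω) (m₂ ω)) 2 μ
      ≤ ENNReal.ofReal (2 * σ ^ 2)⁻¹ * eLpNorm (m₁ - m₂) 4 μ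
          * (2 * eLpNorm Y 4 μ + eLpNorm m₁ 4 μ + eLpNorm m₂ 4 μ) := by
  set G : Ω → ℝ := (2 : ℝ) • Y - m₁ - m₂
  have hG : AEStronglyMeasurable G μ := ((hY.const_smul _).sub hm₁).sub hm₂
  have hfun : (fun ω => gaussLogLik σ (Y ω) (m₁ ω) - gaussLogLik σ (Y ω) (m₂ ω))
      = (2 * σ ^ 2)⁻¹ • ((m₁ - m₂) • G) := by
    ext ω; simp [G, gaussLogLik_sub hσ]
  have hGnorm : eLpNorm G 4 μ ≤ 2 * eLpNorm Y 4 μ + eLpNorm m₁ 4 μ + eLpNorm m₂ 4 μ :=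
    calc eLpNorm G 4 μ ≤ eLpNorm ((2 : ℝ) • Y - m₁) 4 μ + eLpNorm m₂ 4 μ :=
          eLpNorm_sub_le ((hY.const_smul _).sub hm₁) hm₂ (by norm_num)
      _ ≤ eLpNorm ((2 : ℝ) • Y) 4 μ + eLpNorm m₁ 4 μ + eLpNorm m₂ 4 μ := by
          gcongr
          exact eLpNorm_sub_le (hY.const_smul _) hm₁ (by norm_num)
      _ = 2 * eLpNorm Y 4 μ + eLpNorm m₁ 4 μ + eLpNorm m₂ 4 μ := by
          rw [eLpNorm_const_smul, Real.enorm_of_nonneg zero_le_two, ENNReal.ofReal_ofNat]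
  have hHolder := eLpNorm_smul_le_mul_eLpNorm (p := 4) (q := 4) (r := 2) hG (hm₁.sub hm₂)
  rw [hfun, eLpNorm_const_smul, Real.enorm_of_nonneg (by positivity), mul_assoc]
  gcongr
  exact hHolder.trans (by gcongr)

lemma lintegral_ofReal_sq_abs_le_of_eLpNorm_le {f : Ω → ℝ} {a : ℝ} (ha : 0 ≤ a) {K : ℝ≥0∞}
    (hK : K ≠ ⊤) (h : eLpNorm f 2 μ ≤ ENNReal.ofReal a * K) :
    ∫⁻ ω, ENNReal.ofReal (|f ω| ^ 2) ∂μ ≤ ENNReal.ofReal (K.toReal ^ 2 * a ^ 2) := by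
  have hsq : ∫⁻ ω, ENNReal.ofReal (|f ω| ^ 2) ∂μ = eLpNorm f 2 μ ^ 2 := by
    have := eLpNorm_nnreal_pow_eq_lintegral (f := f) (μ := μ) (p := 2) two_ne_zero
    simp only [ENNReal.coe_ofNat, NNReal.coe_ofNat, ENNReal.rpow_two] at this
    rw [this]
    congr 1 with ω
    rw [Real.enorm_eq_ofReal_abs, ENNReal.ofReal_pow (abs_nonneg _)]
  rw [hsq, ENNReal.ofReal_mul (by positivity), ENNReal.ofReal_pow ENNReal.toReal_nonneg,
    ENNReal.ofReal_toReal hK, ENNReal.ofReal_pow ha, ← mul_pow, mul_comm K]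
  gcongr

lemma eLpNorm_le_of_abs_le_abs_add_abs {u y Z : Ω → ℝ} {M : ℝ}
    (hint : Integrable (fun ω => |u ω| ^ 4 + |y ω| ^ 4) μ)
    (hM : ∫ ω, (|u ω| ^ 4 + |y ω| ^ 4) ∂μ ≤ M) (hZ : ∀ ω, |Z ω| ≤ |u ω| + |y ω|) :
    eLpNorm Z 4 μ ≤ ENNReal.ofReal (8 * M) ^ (4⁻¹ : ℝ) := by
  have := eLpNorm_le_of_integral_pow_le (n := 4) four_ne_zero (hint.const_mul 8)
    (fun ω => (pow_le_pow_left₀ (abs_nonneg _) (hZ ω) 4).trans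
      ((add_pow_le (abs_nonneg _) (abs_nonneg _) 4).trans_eq (by norm_num)))
    (K := 8 * M) (by rw [integral_const_mul]; linarith)
  exact_mod_cast this

end Lp

lemma measurable_predFull {Ω P : Type*} [MeasurableSpace Ω] {f : P → ℕ → (ℕ → ℝ) → (ℕ → ℝ) → ℝ}
    (hf : ∀ θ n, Measurable (fun p : (ℕ → ℝ) × (ℕ → ℝ) => f θ n p.1 p.2))
    {U Y : ℕ → Ω → ℝ} (hU : ∀ t, Measurable (U t)) (hY : ∀ t, Measurable (Y t)) (θ : P) (t : ℕ) :
    Measurable (predFull f U Y θ t) :=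
  (hf θ (t - 1)).comp ((measurable_pi_lambda _ fun k => hU (k + 1)).prodMk
    (measurable_pi_lambda _ fun k => hY (k + 1)))

lemma measurable_predFM {Ω P : Type*} [MeasurableSpace Ω] {f : P → ℕ → (ℕ → ℝ) → (ℕ → ℝ) → ℝ}
    (hf : ∀ θ n, Measurable (fun p : (ℕ → ℝ) × (ℕ → ℝ) => f θ n p.1 p.2))
    {U Y : ℕ → Ω → ℝ} (hU : ∀ t, Measurable (U t)) (hY : ∀ t, Measurable (Y t)) (θ : P) (s t : ℕ) :
    Measurable (predFM f U Y θ s t) :=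
  (hf θ (s - 1)).comp ((measurable_pi_lambda _ fun _ => hU _).prodMk
    (measurable_pi_lambda _ fun _ => hY _))

lemma predFM_eq {Ω P : Type*} (f : P → ℕ → (ℕ → ℝ) → (ℕ → ℝ) → ℝ) (U Y : ℕ → Ω → ℝ) (θ : P)
    (s t : ℕ) (ω : Ω) :
    predFM f U Y θ s t ω
      = f θ (s - 1) (fun k => U (t - s + k + 1) ω) (fun k => Y (t - s + k + 1) ω) := by
  simp only [predFM, Nat.add_right_comm]

section Prediction

variable {Ω P : Type*} [MeasurableSpace Ω] {μ : Measure Ω} [IsProbabilityMeasure μ]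
  {f : P → ℕ → (ℕ → ℝ) → (ℕ → ℝ) → ℝ} {U Y : ℕ → Ω → ℝ} {θ : P} {C C' lam : ℝ} {ρ : ℝ≥0∞}

lemma eLpNorm_prediction_le (hUY : ∀ k, AEStronglyMeasurable (fun ω => |U k ω| + |Y k ω|) μ)
    (hρ : ∀ k, eLpNorm (fun ω => |U k ω| + |Y k ω|) 4 μ ≤ ρ) (h0 : 0 ≤ lam) (h1 : lam < 1)
    {n : ℕ} (a : ℕ → ℕ)
    (hstab : ∀ u y : ℕ → ℝ, |f θ (n - 1) u y - f θ (n - 1) (fun _ => 0) (fun _ => 0)|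
      ≤ C * ∑ k ∈ Finset.range (n - 1), lam ^ (n - (k + 1)) * (|u k| + |y k|))
    (hzero : |f θ (n - 1) (fun _ => 0) (fun _ => 0)| ≤ C') :
    eLpNorm (fun ω => f θ (n - 1) (fun k => U (a k) ω) (fun k => Y (a k) ω)) 4 μ
      ≤ ‖C‖ₑ * (ENNReal.ofReal (1 - lam)⁻¹ * ρ) + ‖C'‖ₑ :=
  eLpNorm_le_of_abs_le_weighted_sum_add (X := fun k ω => |U (a k) ω| + |Y (a k) ω|)
    (by norm_num) (fun k => hUY (a k)) (fun k => hρ (a k)) (fun k => pow_nonneg h0 _)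
    (sum_range_pow_sub_succ_le_inv h0 h1 (Nat.sub_le n 1))
    fun ω => abs_le_add_of_abs_sub_le (hstab _ _) hzero

lemma eLpNorm_predFull_sub_predFM_le
    (hUY : ∀ k, AEStronglyMeasurable (fun ω => |U k ω| + |Y k ω|) μ)
    (hρ : ∀ k, eLpNorm (fun ω => |U k ω| + |Y k ω|) 4 μ ≤ ρ) (h0 : 0 ≤ lam) (h1 : lam < 1)
    {s t : ℕ} (hst : s < t)
    (hstab : ∀ u y : ℕ → ℝ,
      |f θ (t - 1) u y - f θ (s - 1) (fun k => u (t - s + k)) (fun k => y (t - s + k))|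
        ≤ C * ∑ k ∈ Finset.range (t - s), lam ^ (t - (k + 1)) * (|u k| + |y k|)) :
    eLpNorm (predFull f U Y θ t - predFM f U Y θ s t) 4 μ
      ≤ ENNReal.ofReal (lam ^ s) * (‖C‖ₑ * (ENNReal.ofReal (1 - lam)⁻¹ * ρ)) := by
  have := eLpNorm_le_of_abs_le_weighted_sum_add (X := fun k ω => |U (k + 1) ω| + |Y (k + 1) ω|)
    (Z := predFull f U Y θ t - predFM f U Y θ s t) (C := C) (c := 0)
    (by norm_num) (fun k => hUY (k + 1)) (fun k => hρ (k + 1)) (fun k => pow_nonneg h0 _)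
    ((sum_range_pow_sub_succ_le h0 h1 (Nat.sub_le t s)).trans_eq
      (by rw [Nat.sub_sub_self hst.le, div_eq_mul_inv]))
    fun ω => by
      rw [Pi.sub_apply, predFull, predFM_eq, add_zero]
      exact hstab _ _
  refine this.trans_eq ?_
  rw [ENNReal.ofReal_mul (by positivity), enorm_zero, add_zero]
  ring

end Prediction

theorem uniformly_stable_gaussian_models_satisfy_S1
    {Ω : Type*} [MeasurableSpace Ω] (μ : Measure Ω) [IsProbabilityMeasure μ]
    {P : Type*} (Θ : Set P)
    (U Y : ℕ → Ω → ℝ) (hUmeas : ∀ t, Measurable (U t)) (hYmeas : ∀ t, Measurable (Y t))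
    -- Gaussian models with fixed variance `σ² > 0`
    (σ : ℝ) (hσ : 0 < σ)
    (f : P → ℕ → (ℕ → ℝ) → (ℕ → ℝ) → ℝ)
    (hfmeas : ∀ θ n, Measurable (fun p : (ℕ → ℝ) × (ℕ → ℝ) => f θ n p.1 p.2))
    -- (i) `sup_t E[|U_t|⁴ + |Y_t|⁴] < ∞`
    (M : ℝ)
    (hint4 : ∀ t, Integrable (fun ω => |U t ω| ^ 4 + |Y t ω| ^ 4) μ)
    (hM : ∀ t, ∫ ω, (|U t ω| ^ 4 + |Y t ω| ^ 4) ∂μ ≤ M)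
    -- (ii) uniform stability of the prediction functions `f_θ`, with constants
    -- `C, C′ < ∞` and `0 < λ < 1` independent of `θ`
    (C C' lam : ℝ) (hlam0 : 0 < lam) (hlam1 : lam < 1)
    (hstab1 : ∀ θ ∈ Θ, ∀ t s : ℕ, 0 < s → s < t → ∀ u y : ℕ → ℝ,
      |f θ (t - 1) u y - f θ (s - 1) (fun k => u (t - s + k)) (fun k => y (t - s + k))|
        ≤ C * ∑ k ∈ Finset.range (t - s), lam ^ (t - (k + 1)) * (|u k| + |y k|))
    (hstab2 : ∀ θ ∈ Θ, ∀ t : ℕ, 0 < t → ∀ u y : ℕ → ℝ,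
      |f θ (t - 1) u y - f θ (t - 1) (fun _ => 0) (fun _ => 0)|
        ≤ C * ∑ k ∈ Finset.range (t - 1), lam ^ (t - (k + 1)) * (|u k| + |y k|))
    (hstab3 : ∀ θ ∈ Θ, ∀ n : ℕ, |f θ n (fun _ => 0) (fun _ => 0)| ≤ C') :
    -- conclusion: the finite-memory approximation property (S1) holds, with
    -- constants `C″ < ∞` and `0 < λ″ < 1` independent of `θ`
    ∃ C'' lam'' : ℝ, 0 < lam'' ∧ lam'' < 1 ∧
      ∀ θ ∈ Θ, ∀ t s : ℕ, 0 < s → s < t →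
        ∫⁻ ω, ENNReal.ofReal
            (|gaussLogLik σ (Y t ω) (predFull f U Y θ t ω) -
              gaussLogLik σ (Y t ω) (predFM f U Y θ s t ω)| ^ 2) ∂μ
          ≤ ENNReal.ofReal (C'' * lam'' ^ s) := by
  set ρ : ℝ≥0∞ := ENNReal.ofReal (8 * M) ^ (4⁻¹ : ℝ)
  have hρ : ∀ k, eLpNorm (fun ω => |U k ω| + |Y k ω|) 4 μ ≤ ρ := fun k =>
    eLpNorm_le_of_abs_le_abs_add_abs (hint4 k) (hM k) fun ω => (abs_of_nonneg (by positivity)).le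
  have hUY : ∀ k, AEStronglyMeasurable (fun ω => |U k ω| + |Y k ω|) μ :=
    fun k => ((hUmeas k).abs.add (hYmeas k).abs).aestronglyMeasurable
  set W : ℝ≥0∞ := ‖C‖ₑ * (ENNReal.ofReal (1 - lam)⁻¹ * ρ)
  set K : ℝ≥0∞ := ENNReal.ofReal (2 * σ ^ 2)⁻¹ * W * (2 * ρ + 2 * (W + ‖C'‖ₑ))
  refine ⟨K.toReal ^ 2, lam ^ 2, by positivity, pow_lt_one₀ hlam0.le hlam1 two_ne_zero,
    fun θ hθ t s hs hst => ?_⟩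
  have hL2 : eLpNorm (fun ω => gaussLogLik σ (Y t ω) (predFull f U Y θ t ω) -
      gaussLogLik σ (Y t ω) (predFM f U Y θ s t ω)) 2 μ ≤ ENNReal.ofReal (lam ^ s) * K :=
    calc _ ≤ _ := eLpNorm_gaussLogLik_sub_le hσ.ne' (hYmeas t).aestronglyMeasurable
            (measurable_predFull hfmeas hUmeas hYmeas θ t).aestronglyMeasurable
            (measurable_predFM hfmeas hUmeas hYmeas θ s t).aestronglyMeasurable
      _ ≤ ENNReal.ofReal (2 * σ ^ 2)⁻¹ * (ENNReal.ofReal (lam ^ s) * W)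
            * (2 * ρ + (W + ‖C'‖ₑ) + (W + ‖C'‖ₑ)) := by
          gcongr
          · exact eLpNorm_predFull_sub_predFM_le hUY hρ hlam0.le hlam1 hst
              (hstab1 θ hθ t s hs hst)
          · exact eLpNorm_le_of_abs_le_abs_add_abs (hint4 t) (hM t)
              fun ω => le_add_of_nonneg_left (abs_nonneg _)
          · exact eLpNorm_prediction_le hUY hρ hlam0.le hlam1 (· + 1)
              (hstab2 θ hθ t (hs.trans hst)) (hstab3 θ hθ _)
          · exact eLpNorm_prediction_le hUY hρ hlam0.le hlam1 (t - s + 1 + ·)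
              (hstab2 θ hθ s hs) (hstab3 θ hθ _)
      _ = _ := by ring
  rw [pow_right_comm lam 2 s]
  exact lintegral_ofReal_sq_abs_le_of_eLpNorm_le (pow_nonneg hlam0.le s) (by finiteness) hL2

end
end

section
/- In the finite observation-space setting, assume the conditions of the consistency lemma hold, so that θ̂_T → argmin_{θ∈Θ} Σ_φ p(φ)·KL( p(· | φ) ‖ q_θ(· | φ) ) almost surely. Assume in addition that the true system is in the model class, i.e. there exists θ⋆ ∈ Θ with q_{θ⋆}(· | φ) = p(· | φ) for all φ, let Θ⋆ = { θ ∈ Θ : q_θ(· | φ) = p(· | φ) for all φ }, and assume the stationary regressor distribution has full support: p(φ) > 0 for every φ. Then dist(θ̂_T, Θ⋆) → 0 almost surely; i.e. the maximum likelihood estimator is consistent. -/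
open MeasureTheory Filter

noncomputable section

/-- Kullback–Leibler divergence between probability mass functions on a finite set. -/
def klPMF {SY : Type*} [Fintype SY] (p q : SY → ℝ) : ℝ :=
  ∑ y, p y * Real.log (p y / q y)

lemma kl_aux {SY : Type*} [Fintype SY] (p q : SY → ℝ)
    (hp0 : ∀ y, 0 ≤ p y) (hp1 : ∑ y, p y = 1)
    (hq0 : ∀ y, 0 < q y) (hq1 : ∑ y, q y = 1) :
    0 ≤ klPMF p q ∧ (klPMF p q = 0 → ∀ y, p y = q y) := by
  have hf : ∀ y, 0 ≤ p y * Real.log (p y / q y) - (p y - q y) := by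
    intro y
    rcases eq_or_lt_of_le (hp0 y) with h | h
    · simp [← h, (hq0 y).le]
    · have hqp : 0 < q y / p y := div_pos (hq0 y) h
      have := Real.log_le_sub_one_of_pos hqp
      have hlog : Real.log (p y / q y) = - Real.log (q y / p y) := by
        rw [← Real.log_inv]; congr 1; field_simp
      rw [hlog]
      have h2 : q y / p y - 1 = (q y - p y) / p y := by field_simp
      have key : p y * (q y / p y - 1) = q y - p y := by field_simp
      nlinarith [mul_le_mul_of_nonneg_left this h.le]
  have hsum : klPMF p q = ∑ y, (p y * Real.log (p y / q y) - (p y - q y)) := by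
    simp [klPMF, Finset.sum_sub_distrib, hp1, hq1]
  constructor
  · rw [hsum]; exact Finset.sum_nonneg fun y _ => hf y
  · intro h0
    have hall := (Finset.sum_eq_zero_iff_of_nonneg (fun y _ => hf y)).mp (by rw [← hsum, h0])
    intro y
    have hy := hall y (Finset.mem_univ y)
    by_contra hne
    rcases eq_or_lt_of_le (hp0 y) with h | h
    · have : q y = 0 := by linarith [hy, (by simp [← h] : p y * Real.log (p y / q y) = 0)]
      exact absurd this (hq0 y).ne'
    · have hqp : 0 < q y / p y := div_pos (hq0 y) h
      have hne1 : q y / p y ≠ 1 := by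
        intro h1; apply hne; field_simp at h1; linarith
      have := Real.log_lt_sub_one_of_pos hqp hne1
      have hlog : Real.log (p y / q y) = - Real.log (q y / p y) := by
        rw [← Real.log_inv]; congr 1; field_simp
      rw [hlog] at hy
      have key : p y * (q y / p y - 1) = q y - p y := by field_simp
      nlinarith [mul_lt_mul_of_pos_left this h]

lemma kl_self {SY : Type*} [Fintype SY] (p : SY → ℝ) : klPMF p p = 0 := by
  unfold klPMF
  apply Finset.sum_eq_zero
  intro y _
  rcases eq_or_ne (p y) 0 with h | h
  · simp [h]
  · simp [div_self h]

/-- Consistency of the maximum likelihood estimator in the finite observation-space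
setting: if `θ̂_T` converges a.s. to the set of minimizers of the expected conditional KL
divergence (the conclusion of the consistency lemma), the true system is in the model
class, and the stationary regressor distribution has full support, then
`dist(θ̂_T, Θ⋆) → 0` almost surely. -/
theorem mle_consistency_finite_state
    {SΦ SY : Type*} [Fintype SΦ] [Fintype SY]
    {Ω : Type*} [MeasurableSpace Ω] (μ : Measure Ω) [IsProbabilityMeasure μ]
    {d : ℕ} (Θ : Set (EuclideanSpace ℝ (Fin d))) (hΘc : IsCompact Θ)
    -- stationary regressor pmf `p(φ)`, with full support
    (pΦ : SΦ → ℝ) (hpΦ0 : ∀ φ, 0 < pΦ φ) (hpΦ1 : ∑ φ, pΦ φ = 1)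
    -- true conditional pmf `p(y|φ)`
    (pc : SΦ → SY → ℝ) (hpc0 : ∀ φ y, 0 ≤ pc φ y) (hpc1 : ∀ φ, ∑ y, pc φ y = 1)
    -- model class: conditional pmfs `q_θ(y|φ)`, positive for `θ ∈ Θ`
    (q : EuclideanSpace ℝ (Fin d) → SΦ → SY → ℝ)
    (hq0 : ∀ θ ∈ Θ, ∀ φ y, 0 < q θ φ y) (hq1 : ∀ θ ∈ Θ, ∀ φ, ∑ y, q θ φ y = 1)
    -- the true system is in the model class
    (θstar : EuclideanSpace ℝ (Fin d)) (hθstar : θstar ∈ Θ)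
    (hreal : ∀ φ y, q θstar φ y = pc φ y)
    -- the maximum likelihood estimator, assumed (by the consistency lemma) to converge
    -- a.s. to the set of minimizers of the expected conditional KL divergence
    (θhat : ℕ → Ω → EuclideanSpace ℝ (Fin d))
    (hmem : ∀ (T : ℕ) (ω : Ω), θhat T ω ∈ Θ)
    (hconv : ∀ᵐ ω ∂μ, Tendsto
      (fun T : ℕ => Metric.infDist (θhat T ω)
        {θ' ∈ Θ | ∀ θ ∈ Θ,
          (∑ φ, pΦ φ * klPMF (pc φ) (q θ' φ)) ≤ ∑ φ, pΦ φ * klPMF (pc φ) (q θ φ)})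
      atTop (nhds 0)) :
    -- conclusion: `dist(θ̂_T, Θ⋆) → 0` almost surely
    ∀ᵐ ω ∂μ, Tendsto
      (fun T : ℕ => Metric.infDist (θhat T ω) {θ ∈ Θ | ∀ φ y, q θ φ y = pc φ y})
      atTop (nhds 0) := by
  have hsetEq : {θ' ∈ Θ | ∀ θ ∈ Θ,
          (∑ φ, pΦ φ * klPMF (pc φ) (q θ' φ)) ≤ ∑ φ, pΦ φ * klPMF (pc φ) (q θ φ)}
      = {θ ∈ Θ | ∀ φ y, q θ φ y = pc φ y} := by
    have hF0 : ∀ θ ∈ Θ, (∀ φ y, q θ φ y = pc φ y) →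
        (∑ φ, pΦ φ * klPMF (pc φ) (q θ φ)) = 0 := by
      intro θ hθ hqp
      apply Finset.sum_eq_zero
      intro φ _
      have : q θ φ = pc φ := funext (hqp φ)
      rw [this, kl_self, mul_zero]
    have hFnn : ∀ θ ∈ Θ, ∀ φ, 0 ≤ pΦ φ * klPMF (pc φ) (q θ φ) := by
      intro θ hθ φ
      exact mul_nonneg (hpΦ0 φ).le
        (kl_aux (pc φ) (q θ φ) (hpc0 φ) (hpc1 φ) (hq0 θ hθ φ) (hq1 θ hθ φ)).1
    ext θ'
    simp only [Set.mem_setOf_eq]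
    constructor
    · rintro ⟨hθ', hmin⟩
      refine ⟨hθ', ?_⟩
      have h1 : (∑ φ, pΦ φ * klPMF (pc φ) (q θ' φ)) ≤ 0 := by
        have := hmin θstar hθstar
        rwa [hF0 θstar hθstar (fun φ y => hreal φ y)] at this
      have h2 : (∑ φ, pΦ φ * klPMF (pc φ) (q θ' φ)) = 0 :=
        le_antisymm h1 (Finset.sum_nonneg fun φ _ => hFnn θ' hθ' φ)
      have hall := (Finset.sum_eq_zero_iff_of_nonneg
        (fun φ _ => hFnn θ' hθ' φ)).mp h2
      intro φ y
      have hkl0 : klPMF (pc φ) (q θ' φ) = 0 := by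
        have := hall φ (Finset.mem_univ φ)
        exact (mul_eq_zero.mp this).resolve_left (hpΦ0 φ).ne'
      exact ((kl_aux (pc φ) (q θ' φ) (hpc0 φ) (hpc1 φ) (hq0 θ' hθ' φ)
        (hq1 θ' hθ' φ)).2 hkl0 y).symm
    · rintro ⟨hθ', hqp⟩
      refine ⟨hθ', fun θ hθ => ?_⟩
      rw [hF0 θ' hθ' hqp]
      exact Finset.sum_nonneg fun φ _ => hFnn θ hθ φ
  rw [← hsetEq]
  exact hconv


end
end

section
/- Let (X_t)_{t≥1} be a real-valued stochastic process with E[X_t] = 0 for all t, and suppose there exist C < ∞ and 0 < λ < 1 such that |E[X_{t−s} X_t]| ≤ C·λ^s for all t ≥ 1 and all 0 ≤ s < t (in particular E[X_t²] ≤ C). Then (1/T) Σ_{t=1}^T X_t → 0 almost surely as T → ∞. -/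
/-!
Exponential decay of the correlations makes `E[(∑_{t ∈ s} X_t)²] ≤ K · #s` for every finite set of
times `s`. For `n² ≤ T < (n+1)²` the square of the partial sum `S_T` is at most twice
`S_{n²}² + ∑_{n² ≤ U < (n+1)²} (S_U - S_{n²})²`, a quantity of expectation `O(n²)`. Divided by
`n⁴` these quantities have summable expectations, so they tend to `0` almost surely, and with them
`(S_T / T)²`.
-/

open MeasureTheory Filter

open scoped Topology

lemma sum_comp_le_tsum_of_injOn {α β : Type*} [DecidableEq β] {g : β → ℝ} (hg : 0 ≤ g)
    (hsum : Summable g) {f : α → β} {s : Finset α} (hf : Set.InjOn f s) :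
    ∑ b ∈ s, g (f b) ≤ ∑' k, g k := by
  rw [← Finset.sum_image hf]
  exact hsum.sum_le_tsum _ fun k _ => hg k

lemma sum_pow_dist_le {lam : ℝ} (h0 : 0 ≤ lam) (h1 : lam < 1) (s : Finset ℕ) (a : ℕ) :
    ∑ b ∈ s, lam ^ Nat.dist a b ≤ 2 * (1 - lam)⁻¹ := by
  have hg : 0 ≤ fun k : ℕ => lam ^ k := fun k => pow_nonneg h0 k
  have hsum := summable_geometric_of_lt_one h0 h1
  rw [← Finset.sum_filter_add_sum_filter_not s (· ≤ a), two_mul,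
    ← tsum_geometric_of_lt_one h0 h1]
  apply add_le_add
  · calc ∑ b ∈ s with b ≤ a, lam ^ Nat.dist a b = ∑ b ∈ s with b ≤ a, lam ^ (a - b) :=
          Finset.sum_congr rfl fun b hb => by
            rw [Nat.dist_eq_sub_of_le_right (Finset.mem_filter.1 hb).2]
      _ ≤ ∑' k, lam ^ k := sum_comp_le_tsum_of_injOn hg hsum fun b hb c hc h => by
          simp only [Finset.coe_filter, Set.mem_ofPred_eq] at hb hc
          omega
  · calc ∑ b ∈ s with ¬b ≤ a, lam ^ Nat.dist a b = ∑ b ∈ s with ¬b ≤ a, lam ^ (b - a) :=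
          Finset.sum_congr rfl fun b hb => by
            rw [Nat.dist_eq_sub_of_le (le_of_not_ge (Finset.mem_filter.1 hb).2)]
      _ ≤ ∑' k, lam ^ k := sum_comp_le_tsum_of_injOn hg hsum fun b hb c hc h => by
          simp only [Finset.coe_filter, Set.mem_ofPred_eq] at hb hc
          omega

section Correlation

variable {Ω : Type*} [MeasurableSpace Ω] {μ : Measure Ω} {X : ℕ → Ω → ℝ} {C lam : ℝ}

lemma abs_integral_mul_le_pow_dist
    (hcov : ∀ t s : ℕ, s ≤ t → |∫ ω, X (t - s) ω * X t ω ∂μ| ≤ C * lam ^ s) (a b : ℕ) :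
    |∫ ω, X a ω * X b ω ∂μ| ≤ C * lam ^ Nat.dist a b := by
  rcases le_total a b with h | h
  · simpa [Nat.sub_sub_self h, Nat.dist_eq_sub_of_le h] using hcov b (b - a) (Nat.sub_le b a)
  · simp_rw [mul_comm (X a _)]
    simpa [Nat.sub_sub_self h, Nat.dist_eq_sub_of_le_right h] using
      hcov a (a - b) (Nat.sub_le a b)

variable (hcorr : ∀ a b, |∫ ω, X a ω * X b ω ∂μ| ≤ C * lam ^ Nat.dist a b)
include hcorr

lemma nonneg_of_abs_integral_mul_le_pow_dist : 0 ≤ C := by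
  simpa using (abs_nonneg _).trans (hcorr 0 0)

lemma integral_sq_sum_le (hX : ∀ t, MemLp (X t) 2 μ) (h0 : 0 ≤ lam) (h1 : lam < 1)
    (s : Finset ℕ) :
    ∫ ω, (∑ t ∈ s, X t ω) ^ 2 ∂μ ≤ 2 * C * (1 - lam)⁻¹ * s.card := by
  have hC := nonneg_of_abs_integral_mul_le_pow_dist hcorr
  have hint a b : Integrable (fun ω => X a ω * X b ω) μ := (hX a).integrable_mul (hX b)
  calc ∫ ω, (∑ t ∈ s, X t ω) ^ 2 ∂μ = ∑ a ∈ s, ∑ b ∈ s, ∫ ω, X a ω * X b ω ∂μ := by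
        simp_rw [sq, Finset.sum_mul_sum]
        rw [integral_finsetSum _ fun a _ => integrable_finsetSum _ fun b _ => hint a b]
        exact Finset.sum_congr rfl fun a _ => integral_finsetSum _ fun b _ => hint a b
    _ ≤ ∑ a ∈ s, C * ∑ b ∈ s, lam ^ Nat.dist a b := by
        simp_rw [Finset.mul_sum]
        gcongr with a _ b _
        exact (le_abs_self _).trans (hcorr a b)
    _ ≤ ∑ a ∈ s, C * (2 * (1 - lam)⁻¹) := by
        gcongr with a _
        exact sum_pow_dist_le h0 h1 s a
    _ = 2 * C * (1 - lam)⁻¹ * s.card := by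
        rw [Finset.sum_const, nsmul_eq_mul]
        ring

end Correlation

lemma ae_tendsto_zero_of_summable_integral_norm {Ω E : Type*} [MeasurableSpace Ω]
    [NormedAddCommGroup E] {μ : Measure Ω} {F : ℕ → Ω → E} (hF : ∀ n, Integrable (F n) μ)
    (hsum : Summable fun n => ∫ ω, ‖F n ω‖ ∂μ) :
    ∀ᵐ ω ∂μ, Tendsto (fun n => F n ω) atTop (𝓝 0) := by
  have hnorm : ∑' n, eLpNorm (F n) 1 μ ≠ ⊤ := by
    simp_rw [eLpNorm_one_eq_lintegral_enorm, ← ofReal_integral_norm_eq_lintegral_enorm (hF _)]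
    rw [← ENNReal.ofReal_tsum_of_nonneg (fun n => integral_nonneg fun ω => norm_nonneg _) hsum]
    exact ENNReal.ofReal_ne_top
  filter_upwards [summable_norm_of_tsum_eLpNorm_ne_top le_rfl
    (fun n => (hF n).aestronglyMeasurable) hnorm] with ω hω
  exact tendsto_zero_iff_norm_tendsto_zero.2 hω.tendsto_atTop_zero

/-- A substitute for the maximum of `(∑_{t<T} x t)²` over `n² ≤ T < (n+1)²` whose expectation is
controlled by second moments alone. -/
def blockSumSq (x : ℕ → ℝ) (n : ℕ) : ℝ :=
  (∑ t ∈ Finset.range (n ^ 2), x t) ^ 2 +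
    ∑ T ∈ Finset.Ico (n ^ 2) ((n + 1) ^ 2), (∑ t ∈ Finset.Ico (n ^ 2) T, x t) ^ 2

lemma blockSumSq_nonneg (x : ℕ → ℝ) (n : ℕ) : 0 ≤ blockSumSq x n :=
  add_nonneg (sq_nonneg _) (Finset.sum_nonneg fun _ _ => sq_nonneg _)

lemma sq_sum_range_le_blockSumSq (x : ℕ → ℝ) {n T : ℕ} (hnT : n ^ 2 ≤ T) (hTn : T < (n + 1) ^ 2) :
    (∑ t ∈ Finset.range T, x t) ^ 2 ≤ 2 * blockSumSq x n := by
  have hT : (∑ t ∈ Finset.Ico (n ^ 2) T, x t) ^ 2 ≤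
      ∑ U ∈ Finset.Ico (n ^ 2) ((n + 1) ^ 2), (∑ t ∈ Finset.Ico (n ^ 2) U, x t) ^ 2 :=
    Finset.single_le_sum (f := fun U => (∑ t ∈ Finset.Ico (n ^ 2) U, x t) ^ 2)
      (fun _ _ => sq_nonneg _) (Finset.mem_Ico.2 ⟨hnT, hTn⟩)
  rw [← Finset.sum_range_add_sum_Ico x hnT, blockSumSq]
  linarith [add_sq_le (a := ∑ t ∈ Finset.range (n ^ 2), x t) (b := ∑ t ∈ Finset.Ico (n ^ 2) T, x t)]

lemma tendsto_nat_sqrt_atTop : Tendsto Nat.sqrt atTop atTop :=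
  tendsto_atTop_atTop.2 fun N => ⟨N ^ 2, fun _ hT => Nat.le_sqrt'.2 hT⟩

lemma tendsto_inv_mul_sum_range_of_blockSumSq (x : ℕ → ℝ)
    (hx : Tendsto (fun n => blockSumSq x n / (n : ℝ) ^ 4) atTop (𝓝 0)) :
    Tendsto (fun T : ℕ => (T : ℝ)⁻¹ * ∑ t ∈ Finset.range T, x t) atTop (𝓝 0) := by
  have hsq : Tendsto (fun T : ℕ => ((T : ℝ)⁻¹ * ∑ t ∈ Finset.range T, x t) ^ 2) atTop (𝓝 0) := by
    have hlim := (hx.const_mul 2).comp tendsto_nat_sqrt_atTop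
    rw [mul_zero] at hlim
    refine squeeze_zero' (Eventually.of_forall fun T => sq_nonneg _) ?_ hlim
    filter_upwards [eventually_ge_atTop 1] with T hT
    have hn : 0 < Nat.sqrt T := Nat.sqrt_pos.2 hT
    have hnT : ((Nat.sqrt T : ℕ) : ℝ) ^ 2 ≤ T := by exact_mod_cast Nat.sqrt_le' T
    have hblock := sq_sum_range_le_blockSumSq x (Nat.sqrt_le' T) (Nat.lt_succ_sqrt' T)
    calc ((T : ℝ)⁻¹ * ∑ t ∈ Finset.range T, x t) ^ 2
        = (∑ t ∈ Finset.range T, x t) ^ 2 / (T : ℝ) ^ 2 := by ring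
      _ ≤ 2 * blockSumSq x (Nat.sqrt T) / (((Nat.sqrt T : ℕ) : ℝ) ^ 2) ^ 2 := by
        gcongr
        exact (sq_nonneg _).trans hblock
      _ = 2 * (blockSumSq x (Nat.sqrt T) / ((Nat.sqrt T : ℕ) : ℝ) ^ 4) := by ring
  rw [tendsto_zero_iff_abs_tendsto_zero]
  simpa only [Real.sqrt_sq_eq_abs, Real.sqrt_zero, Function.comp_def] using hsq.sqrt

section Block

variable {Ω : Type*} [MeasurableSpace Ω] {μ : Measure Ω} {X : ℕ → Ω → ℝ}

lemma integrable_blockSumSq (hX : ∀ t, MemLp (X t) 2 μ) (n : ℕ) :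
    Integrable (fun ω => blockSumSq (fun t => X t ω) n) μ :=
  (memLp_finsetSum _ fun t _ => hX t).integrable_sq.add
    (integrable_finsetSum _ fun _ _ => (memLp_finsetSum _ fun t _ => hX t).integrable_sq)

lemma integral_blockSumSq_le (hX : ∀ t, MemLp (X t) 2 μ) {C lam : ℝ} (h0 : 0 ≤ lam)
    (h1 : lam < 1) (hcorr : ∀ a b, |∫ ω, X a ω * X b ω ∂μ| ≤ C * lam ^ Nat.dist a b) (n : ℕ) :
    ∫ ω, blockSumSq (fun t => X t ω) n ∂μ ≤ 7 * (2 * C * (1 - lam)⁻¹) * n ^ 2 := by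
  set K := 2 * C * (1 - lam)⁻¹
  have hK : 0 ≤ K := by
    have := nonneg_of_abs_integral_mul_le_pow_dist hcorr
    have : 0 ≤ (1 - lam)⁻¹ := inv_nonneg.2 (by linarith)
    positivity
  have hsq (s : Finset ℕ) := (memLp_finsetSum s fun t _ => hX t).integrable_sq
  have hblock : ∀ U ∈ Finset.Ico (n ^ 2) ((n + 1) ^ 2),
      ∫ ω, (∑ t ∈ Finset.Ico (n ^ 2) U, X t ω) ^ 2 ∂μ ≤ K * (2 * n) := fun U hU => by
    refine (integral_sq_sum_le hcorr hX h0 h1 _).trans (mul_le_mul_of_nonneg_left ?_ hK)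
    have : (n + 1) ^ 2 = n ^ 2 + 2 * n + 1 := by ring
    have : U - n ^ 2 ≤ 2 * n := by rw [Finset.mem_Ico] at hU; omega
    simpa using (Nat.cast_le (α := ℝ)).2 this
  have hcard : (Finset.Ico (n ^ 2) ((n + 1) ^ 2)).card = 2 * n + 1 := by
    rw [Nat.card_Ico]
    have : (n + 1) ^ 2 = n ^ 2 + 2 * n + 1 := by ring
    omega
  unfold blockSumSq
  rw [integral_add (hsq _) (integrable_finsetSum _ fun U _ => hsq _),
    integral_finsetSum _ fun U _ => hsq _]
  calc _ ≤ K * (n ^ 2 : ℕ) + ∑ U ∈ Finset.Ico (n ^ 2) ((n + 1) ^ 2), K * (2 * n) :=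
        add_le_add ((integral_sq_sum_le hcorr hX h0 h1 _).trans_eq (by rw [Finset.card_range]))
          (Finset.sum_le_sum hblock)
    _ ≤ 7 * K * n ^ 2 := by
        rw [Finset.sum_const, hcard, nsmul_eq_mul]
        have hn : (n : ℝ) ≤ n ^ 2 := by exact_mod_cast Nat.le_self_pow two_ne_zero n
        push_cast
        nlinarith [mul_le_mul_of_nonneg_left hn hK]

end Block

theorem lln_of_exponential_correlation_decay_general
    {Ω : Type*} [MeasurableSpace Ω] (μ : Measure Ω)
    (X : ℕ → Ω → ℝ) (hX : ∀ t, MemLp (X t) 2 μ)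
    (C lam : ℝ) (hlam0 : 0 < lam) (hlam1 : lam < 1)
    (hcov : ∀ t s : ℕ, s ≤ t → |∫ ω, X (t - s) ω * X t ω ∂μ| ≤ C * lam ^ s) :
    ∀ᵐ ω ∂μ, Tendsto (fun T : ℕ => (T : ℝ)⁻¹ * ∑ t ∈ Finset.range T, X t ω)
      atTop (nhds 0) := by
  have hcorr := abs_integral_mul_le_pow_dist hcov
  set M : ℕ → Ω → ℝ := fun n ω => blockSumSq (fun t => X t ω) n / (n : ℝ) ^ 4
  have hM : ∀ n, Integrable (M n) μ := fun n => (integrable_blockSumSq hX n).div_const _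
  have hsum : Summable fun n => ∫ ω, ‖M n ω‖ ∂μ := by
    refine ((Real.summable_one_div_nat_pow.2 one_lt_two).mul_left
      (7 * (2 * C * (1 - lam)⁻¹))).of_nonneg_of_le
      (fun n => integral_nonneg fun _ => norm_nonneg _) fun n => ?_
    calc ∫ ω, ‖M n ω‖ ∂μ = ∫ ω, M n ω ∂μ := integral_congr_ae <| .of_forall fun ω =>
          Real.norm_of_nonneg (div_nonneg (blockSumSq_nonneg _ n) (by positivity))
      _ = (∫ ω, blockSumSq (fun t => X t ω) n ∂μ) / (n : ℝ) ^ 4 := integral_div _ _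
      _ ≤ 7 * (2 * C * (1 - lam)⁻¹) * n ^ 2 / (n : ℝ) ^ 4 := by
          gcongr
          exact integral_blockSumSq_le hX hlam0.le hlam1 hcorr n
      _ = 7 * (2 * C * (1 - lam)⁻¹) * (1 / (n : ℝ) ^ 2) := by
          rcases eq_or_ne n 0 with rfl | hn
          · norm_num
          · field_simp
  filter_upwards [ae_tendsto_zero_of_summable_integral_norm hM hsum] with ω hω
  exact tendsto_inv_mul_sum_range_of_blockSumSq _ hω

/-- Strong law of large numbers for a centered, square-integrable real-valued process whose
correlations decay exponentially: if `E[X_t] = 0` and `|E[X_{t-s} X_t]| ≤ C·λ^s`, then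
`(1/T) ∑_{t=1}^T X_t → 0` almost surely. -/
theorem lln_of_exponential_correlation_decay
    {Ω : Type*} [MeasurableSpace Ω] (μ : Measure Ω) [IsProbabilityMeasure μ]
    (X : ℕ → Ω → ℝ) (hX : ∀ t, MemLp (X t) 2 μ)
    (hmean : ∀ t, ∫ ω, X t ω ∂μ = 0)
    (C lam : ℝ) (hlam0 : 0 < lam) (hlam1 : lam < 1)
    (hcov : ∀ t s : ℕ, s ≤ t → |∫ ω, X (t - s) ω * X t ω ∂μ| ≤ C * lam ^ s) :
    ∀ᵐ ω ∂μ, Tendsto (fun T : ℕ => (T : ℝ)⁻¹ * ∑ t ∈ Finset.range T, X t ω)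
      atTop (nhds 0) :=
  lln_of_exponential_correlation_decay_general μ X hX C lam hlam0 hlam1 hcov
end
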